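/- arXiv:1908.00649 — 3 statements merged into one kernel-verified Lean document; each statement's English description precedes it below -/
import Mathlib

section
/- Let G be a Grothendieck category and t = (T, F) a torsion pair of finite type. If T ∈ T is such that Hom(T,-) : G → Ab preserves direct limits of direct systems lying in T, then T is a finitely presented object of G. -/
/-!
STATEMENT 9: Let `G` be a Grothendieck category and `t = (T, F)` a torsion
pair of finite type.  If `T₀ ∈ T` is such that `Hom(T₀,-) : G → Ab` preserves
direct limits of direct systems lying in `T`, then `T₀` is a finitely
presented object of `G`.
-/

open CategoryTheory Limits Opposite

universe v u

variable {C : Type u} [Category.{v} C]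

/-- `Hom(X, -)` preserves filtered colimits. -/
def FinitelyPresented (X : C) : Prop :=
  ∀ (J : Type v) [SmallCategory J] [IsFiltered J] (D : J ⥤ C) (c : Cocone D),
    Nonempty (IsColimit c) →
      Nonempty (IsColimit ((coyoneda.obj (op X)).mapCocone c))

/-- A torsion pair on an abelian category, as a pair of classes of objects. -/
structure IsTorsionPair [Abelian C] (T F : C → Prop) : Prop where
  torsion_iff : ∀ X : C, T X ↔ ∀ (Y : C), F Y → ∀ f : X ⟶ Y, f = 0
  torsionFree_iff : ∀ Y : C, F Y ↔ ∀ (X : C), T X → ∀ f : X ⟶ Y, f = 0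
  exists_seq : ∀ X : C, ∃ (A B : C) (i : A ⟶ X) (p : X ⟶ B) (w : i ≫ p = 0),
    T A ∧ F B ∧ (ShortComplex.mk i p w).ShortExact

/-- A class of objects is closed under direct (filtered) limits. -/
def ClosedUnderDirectLimits (P : C → Prop) : Prop :=
  ∀ (J : Type v) [SmallCategory J] [IsFiltered J] (D : J ⥤ C),
    (∀ j : J, P (D.obj j)) →
    ∀ (c : Cocone D), IsColimit c → P c.pt

/-- `Hom(X,-)` preserves direct limits of systems of objects in the class `P`. -/
def HomPreservesDirectLimitsOf (P : C → Prop) (X : C) : Prop :=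
  ∀ (J : Type v) [SmallCategory J] [IsFiltered J] (D : J ⥤ C),
    (∀ j : J, P (D.obj j)) →
    ∀ (c : Cocone D), IsColimit c →
      Nonempty (IsColimit ((coyoneda.obj (op X)).mapCocone c))

section Aux

variable [Abelian C]
variable (A B : C → C) (i : ∀ X : C, A X ⟶ X) (p : ∀ X : C, X ⟶ B X)
variable (hzero : ∀ X Y : C, ∀ f : A X ⟶ B Y, f = 0)

section

variable (hker : ∀ X : C,
    IsLimit (KernelFork.ofι (i X) (hzero X X (i X ≫ p X)) : KernelFork (p X)))
variable (hcoker : ∀ X : C,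
    IsColimit (CokernelCofork.ofπ (p X) (hzero X X (i X ≫ p X)) : CokernelCofork (i X)))

lemma aux_mono {W X Y : C} {f : X ⟶ Y} {ι : W ⟶ X} {w : ι ≫ f = 0}
    (hk : IsLimit (KernelFork.ofι ι w)) : Mono ι := by
  simpa using mono_of_isLimit_fork hk

variable {J : Type v} [SmallCategory J] (D : J ⥤ C)

/-- The torsion-subobject functor associated to a direct system. -/
noncomputable def tfun : J ⥤ C where
  obj j := A (D.obj j)
  map {j j'} u := (KernelFork.IsLimit.lift' (hker (D.obj j')) (i (D.obj j) ≫ D.map u)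
    (by rw [Category.assoc]; exact hzero _ _ _)).1
  map_id j := by
    have := aux_mono (hker (D.obj j))
    rw [← cancel_mono (i (D.obj j))]
    have h2 := (KernelFork.IsLimit.lift' (hker (D.obj j)) (i (D.obj j) ≫ D.map (𝟙 j))
      (by rw [Category.assoc]; exact hzero _ _ _)).2
    simp only [Fork.ι_ofι] at h2
    simp [h2]
  map_comp {j j' j''} u u' := by
    have := aux_mono (hker (D.obj j''))
    rw [← cancel_mono (i (D.obj j''))]
    have h2 := (KernelFork.IsLimit.lift' (hker (D.obj j'')) (i (D.obj j) ≫ D.map (u ≫ u'))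
      (by rw [Category.assoc]; exact hzero _ _ _)).2
    have h3 := (KernelFork.IsLimit.lift' (hker (D.obj j')) (i (D.obj j) ≫ D.map u)
      (by rw [Category.assoc]; exact hzero _ _ _)).2
    have h4 := (KernelFork.IsLimit.lift' (hker (D.obj j'')) (i (D.obj j') ≫ D.map u')
      (by rw [Category.assoc]; exact hzero _ _ _)).2
    simp only [Fork.ι_ofι] at h2 h3 h4
    simp only [Category.assoc] at h2 h3 h4 ⊢
    simp only [h2, h4, reassoc_of% h3, Functor.map_comp, Category.assoc]

@[simp] lemma tfun_map_i {J : Type v} [SmallCategory J] (D : J ⥤ C) {j j' : J} (u : j ⟶ j') :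
    (tfun A B i p hzero hker D).map u ≫ i (D.obj j') = i (D.obj j) ≫ D.map u := by
  have h2 := (KernelFork.IsLimit.lift' (hker (D.obj j')) (i (D.obj j) ≫ D.map u)
    (by rw [Category.assoc]; exact hzero _ _ _)).2
  simp only [Fork.ι_ofι] at h2
  exact h2

/-- The inclusion of the torsion-subobject system. -/
noncomputable def iNat : tfun A B i p hzero hker D ⟶ D where
  app j := i (D.obj j)
  naturality j j' u := by exact tfun_map_i A B i p hzero hker D u

/-- The torsion-free quotient functor associated to a direct system. -/
noncomputable def bfun : J ⥤ C where
  obj j := B (D.obj j)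
  map {j j'} u := (CokernelCofork.IsColimit.desc' (hcoker (D.obj j)) (D.map u ≫ p (D.obj j'))
    (by rw [← Category.assoc]; exact hzero _ _ _)).1
  map_id j := by
    have : Epi (p (D.obj j)) := by simpa using epi_of_isColimit_cofork (hcoker (D.obj j))
    rw [← cancel_epi (p (D.obj j))]
    have h2 := (CokernelCofork.IsColimit.desc' (hcoker (D.obj j)) (D.map (𝟙 j) ≫ p (D.obj j))
      (by rw [← Category.assoc]; exact hzero _ _ _)).2
    simp only [Cofork.π_ofπ] at h2
    simp [h2]
  map_comp {j j' j''} u u' := by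
    have : Epi (p (D.obj j)) := by simpa using epi_of_isColimit_cofork (hcoker (D.obj j))
    rw [← cancel_epi (p (D.obj j))]
    have h2 := (CokernelCofork.IsColimit.desc' (hcoker (D.obj j)) (D.map (u ≫ u') ≫ p (D.obj j''))
      (by rw [← Category.assoc]; exact hzero _ _ _)).2
    have h3 := (CokernelCofork.IsColimit.desc' (hcoker (D.obj j)) (D.map u ≫ p (D.obj j'))
      (by rw [← Category.assoc]; exact hzero _ _ _)).2
    have h4 := (CokernelCofork.IsColimit.desc' (hcoker (D.obj j')) (D.map u' ≫ p (D.obj j''))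
      (by rw [← Category.assoc]; exact hzero _ _ _)).2
    simp only [Cofork.π_ofπ] at h2 h3 h4
    simp [reassoc_of% h2, reassoc_of% h3, h4, h2]
  
@[simp] lemma p_bfun_map {J : Type v} [SmallCategory J] (D : J ⥤ C) {j j' : J} (u : j ⟶ j') :
    p (D.obj j) ≫ (bfun A B i p hzero hcoker D).map u = D.map u ≫ p (D.obj j') := by
  have h2 := (CokernelCofork.IsColimit.desc' (hcoker (D.obj j)) (D.map u ≫ p (D.obj j'))
    (by rw [← Category.assoc]; exact hzero _ _ _)).2
  simp only [Cofork.π_ofπ] at h2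
  exact h2

/-- The projection onto the torsion-free quotient system. -/
noncomputable def pNat : D ⟶ bfun A B i p hzero hcoker D where
  app j := p (D.obj j)
  naturality j j' u := by exact (p_bfun_map A B i p hzero hcoker D u).symm

lemma iNat_pNat : iNat A B i p hzero hker D ≫ pNat A B i p hzero hcoker D = 0 := by
  ext j
  exact hzero _ _ _

/-- Pointwise, the inclusion of the torsion system is a kernel of the projection. -/
noncomputable def iNatIsKernel :
    IsLimit (KernelFork.ofι (iNat A B i p hzero hker D)
      (iNat_pNat A B i p hzero hker hcoker D)) := by
  apply evaluationJointlyReflectsLimits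
  intro j
  exact (isLimitMapConeForkEquiv' ((evaluation J C).obj j)
    (iNat_pNat A B i p hzero hker hcoker D)).symm (hker (D.obj j))

end

end Aux

theorem finitelyPresented_of_torsion_hom_condition
    [Abelian C] [HasColimits C] [AB5 C]
    (hsep : ∃ G : C, IsSeparator G)
    (T F : C → Prop) (htp : IsTorsionPair T F)
    (hft : ClosedUnderDirectLimits F)
    (T₀ : C) (hT₀ : T T₀)
    (h : HomPreservesDirectLimitsOf T T₀) :
    FinitelyPresented T₀ := by
  classical
  intro J _ _ D c hc'
  obtain ⟨hc⟩ := hc'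
  choose A B i p w hTA hFB hse using htp.exists_seq
  have hzero : ∀ X Y : C, ∀ f : A X ⟶ B Y, f = 0 := fun X Y f =>
    (htp.torsion_iff (A X)).mp (hTA X) (B Y) (hFB Y) f
  have hker : ∀ X : C,
      IsLimit (KernelFork.ofι (i X) (hzero X X (i X ≫ p X)) : KernelFork (p X)) := fun X => by
    have := (hse X).mono_f
    exact (hse X).exact.fIsKernel
  have hcoker : ∀ X : C,
      IsColimit (CokernelCofork.ofπ (p X) (hzero X X (i X ≫ p X)) : CokernelCofork (i X)) :=
    fun X => by
      have := (hse X).epi_g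
      exact (hse X).exact.gIsCokernel
  set tD := tfun A B i p hzero hker D with htD
  set bD := bfun A B i p hzero hcoker D with hbD
  set ι' := iNat A B i p hzero hker D with hι'
  set π' := pNat A B i p hzero hcoker D with hπ'
  -- the colimit of the torsion subsystem maps monomorphically into the colimit of `D`,
  -- with torsion-free cokernel
  have hw : ι' ≫ π' = 0 := iNat_pNat A B i p hzero hker hcoker D
  have hcolimKer :
      IsLimit (KernelFork.ofι (colim.map ι')
        (by rw [← colim.map_comp, hw, Functor.map_zero]) : KernelFork (colim.map π')) :=
    isLimitForkMapOfIsLimit' colim hw (iNatIsKernel A B i p hzero hker hcoker D)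
  have hmonoψ : Mono (colim.map ι') := by
    simpa using mono_of_isLimit_fork hcolimKer
  -- torsion-freeness of the colimit of the quotients
  have hQ : F (colimit bD) :=
    hft J bD (fun j => hFB (D.obj j)) (colimit.cocone bD) (colimit.isColimit bD)
  -- `Hom(T₀, -)` applied to the colimit of the torsion subsystem
  obtain ⟨hco⟩ := h J tD (fun j => hTA (D.obj j)) (colimit.cocone tD) (colimit.isColimit tD)
  obtain ⟨e, he⟩ : ∃ e : colimit D ≅ c.pt, ∀ j : J, colimit.ι D j ≫ e.hom = c.ι.app j :=
    ⟨IsColimit.coconePointUniqueUpToIso (colimit.isColimit D) hc,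
     fun j => IsColimit.comp_coconePointUniqueUpToIso_hom (colimit.isColimit D) hc j⟩
  have hmonoi : ∀ X : C, Mono (i X) := fun X => aux_mono (hker X)
  refine ⟨Types.FilteredColimit.isColimitOf _ _ ?_ ?_⟩
  · -- joint surjectivity
    intro x
    have hx : (x ≫ e.inv) ≫ colim.map π' = 0 :=
      (htp.torsion_iff T₀).mp hT₀ _ hQ _
    obtain ⟨l, hl⟩ := KernelFork.IsLimit.lift' hcolimKer (x ≫ e.inv) hx
    simp only [Fork.ι_ofι] at hl
    obtain ⟨j, y, hy⟩ := Types.jointly_surjective _ hco l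
    have hy' : y ≫ colimit.ι tD j = l := hy
    refine ⟨j, y ≫ i (D.obj j), ?_⟩
    have h1 : (y ≫ colimit.ι tD j) ≫ colim.map ι' ≫ e.hom
        = (y ≫ i (D.obj j)) ≫ c.ι.app j := by
      rw [Category.assoc, colim_map, ι_colimMap_assoc]
      have hι'app : ι'.app j = i (D.obj j) := rfl
      rw [hι'app, ← he j]
      exact (Category.assoc _ _ _).symm
    show x = (y ≫ i (D.obj j)) ≫ c.ι.app j
    rw [← h1, hy', ← Category.assoc, hl]
    simp
  · -- eventual equality
    intro j j' xi xj hx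
    have hx' : xi ≫ c.ι.app j = xj ≫ c.ι.app j' := hx
    have hxi0 : xi ≫ p (D.obj j) = 0 :=
      (htp.torsion_iff T₀).mp hT₀ _ (hFB (D.obj j)) _
    have hxj0 : xj ≫ p (D.obj j') = 0 :=
      (htp.torsion_iff T₀).mp hT₀ _ (hFB (D.obj j')) _
    obtain ⟨gi, hgi⟩ := KernelFork.IsLimit.lift' (hker (D.obj j)) xi hxi0
    obtain ⟨gj, hgj⟩ := KernelFork.IsLimit.lift' (hker (D.obj j')) xj hxj0
    simp only [Fork.ι_ofι] at hgi hgj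
    have key : gi ≫ colimit.ι tD j = gj ≫ colimit.ι tD j' := by
      have : Mono (colim.map ι' ≫ e.hom) := mono_comp _ _
      rw [← cancel_mono (colim.map ι' ≫ e.hom)]
      have h1 : ∀ (k : J) (g : T₀ ⟶ tD.obj k),
          (g ≫ colimit.ι tD k) ≫ colim.map ι' ≫ e.hom = (g ≫ i (D.obj k)) ≫ c.ι.app k := by
        intro k g
        rw [Category.assoc, colim_map, ι_colimMap_assoc]
        have hι'app : ι'.app k = i (D.obj k) := rfl
        rw [hι'app, ← he k]
        exact (Category.assoc _ _ _).symm
      exact (h1 j gi).trans ((by rw [hgi, hgj, hx'] : (gi ≫ i (D.obj j)) ≫ c.ι.app j = (gj ≫ i (D.obj j')) ≫ c.ι.app j').trans (h1 j' gj).symm)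
    have key' := (Types.FilteredColimit.isColimit_eq_iff _ hco
      (i := j) (j := j') (xi := gi) (xj := gj)).mp key
    obtain ⟨k, u, u', hk⟩ := key'
    refine ⟨k, u, u', ?_⟩
    have hk' : gi ≫ tD.map u = gj ≫ tD.map u' := hk
    have h2 : ∀ (a : J) (g : T₀ ⟶ tD.obj a) (v : a ⟶ k),
        (g ≫ tD.map v) ≫ i (D.obj k) = (g ≫ i (D.obj a)) ≫ D.map v := by
      intro a g v
      show (g ≫ (tfun A B i p hzero hker D).map v) ≫ i (D.obj k) = (g ≫ i (D.obj a)) ≫ D.map v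
      exact (Category.assoc _ _ _).trans ((congrArg (g ≫ ·) (tfun_map_i A B i p hzero hker D v)).trans (Category.assoc _ _ _).symm)
    have : xi ≫ D.map u = xj ≫ D.map u' := by
      exact (congrArg (· ≫ D.map u) hgi).symm.trans ((h2 j gi u).symm.trans ((congrArg (· ≫ i (D.obj k)) hk').trans ((h2 j' gj u').trans (congrArg (· ≫ D.map u') hgj))))
    exact this
end

section
/- Let G be a locally finitely presented Grothendieck category and (T, F) a torsion pair of finite type that restricts to fp(G) (i.e. t(M) is finitely presented whenever M is). Then G is locally coherent if and only if: (1) every morphism between finitely presented torsion objects has finitely presented kernel, and (2) every morphism between finitely presented objects with domain in F and codomain in T ∪ F has finitely presented kernel. -/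
/-!
STATEMENT 12: Let `G` be a locally finitely presented Grothendieck category
and `(T, F)` a torsion pair of finite type that restricts to `fp(G)` (the
torsion radical preserves finitely presented objects).  Then `G` is locally
coherent (finitely presented objects are closed under kernels) if and only
if: (1) every morphism between finitely presented torsion objects has
finitely presented kernel, and (2) every morphism between finitely presented
objects with domain in `F` and codomain in `T ∪ F` has finitely presented
kernel.
-/

open CategoryTheory Limits Opposite

universe v u

variable {C : Type u} [Category.{v} C]

lemma FinitelyPresented.factor {X : C} (hX : FinitelyPresented X)
    {J : Type v} [SmallCategory J] [IsFiltered J] {D : J ⥤ C} {c : Cocone D}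
    (hc : IsColimit c) (φ : X ⟶ c.pt) :
    ∃ (j : J) (g : X ⟶ D.obj j), g ≫ c.ι.app j = φ := by
  obtain ⟨hm⟩ := hX J D c ⟨hc⟩
  obtain ⟨j, y, hy⟩ := Types.jointly_surjective _ hm φ
  exact ⟨j, y, by simpa using hy⟩

lemma FinitelyPresented.eq {X : C} (hX : FinitelyPresented X)
    {J : Type v} [SmallCategory J] [IsFiltered J] {D : J ⥤ C} {c : Cocone D}
    (hc : IsColimit c) {j j' : J} (g : X ⟶ D.obj j) (g' : X ⟶ D.obj j')
    (h : g ≫ c.ι.app j = g' ≫ c.ι.app j') :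
    ∃ (k : J) (u : j ⟶ k) (u' : j' ⟶ k), g ≫ D.map u = g' ≫ D.map u' := by
  obtain ⟨hm⟩ := hX J D c ⟨hc⟩
  have := (Types.FilteredColimit.isColimit_eq_iff (D ⋙ coyoneda.obj (op X)) hm
    (i := j) (j := j') (xi := g) (xj := g')).1 (by simpa using h)
  simpa using this

lemma finitelyPresented_of_exists {X : C}
    (H : ∀ (J : Type v) [SmallCategory J] [IsFiltered J] (D : J ⥤ C) (c : Cocone D),
      IsColimit c →
        (∀ φ : X ⟶ c.pt, ∃ (j : J) (g : X ⟶ D.obj j), g ≫ c.ι.app j = φ) ∧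
        (∀ (j j' : J) (g : X ⟶ D.obj j) (g' : X ⟶ D.obj j'),
          g ≫ c.ι.app j = g' ≫ c.ι.app j' →
          ∃ (k : J) (u : j ⟶ k) (u' : j' ⟶ k), g ≫ D.map u = g' ≫ D.map u')) :
    FinitelyPresented X := by
  intro J _ _ D c hc
  obtain ⟨hc⟩ := hc
  obtain ⟨h1, h2⟩ := H J D c hc
  refine ⟨Types.FilteredColimit.isColimitOf _ _ ?_ ?_⟩
  · intro φ
    obtain ⟨j, g, hg⟩ := h1 φ
    exact ⟨j, g, by simpa using hg.symm⟩
  · intro i j xi xj hh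
    obtain ⟨k, u, u', he⟩ := h2 i j xi xj (by simpa using hh)
    exact ⟨k, u, u', by simpa using he⟩

lemma FinitelyPresented.of_iso {X Y : C} (e : X ≅ Y) (hX : FinitelyPresented X) :
    FinitelyPresented Y := by
  apply finitelyPresented_of_exists
  intro J _ _ D c hc
  constructor
  · intro φ
    obtain ⟨j, g, hg⟩ := hX.factor hc (e.hom ≫ φ)
    exact ⟨j, e.inv ≫ g, by rw [Category.assoc, hg, e.inv_hom_id_assoc]⟩
  · intro j j' g g' h
    obtain ⟨k, u, u', he⟩ := hX.eq hc (e.hom ≫ g) (e.hom ≫ g')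
      (by rw [Category.assoc, Category.assoc, h])
    rw [Category.assoc, Category.assoc] at he
    exact ⟨k, u, u', by
      have := (cancel_epi e.hom).1 he
      exact this⟩

section Abelian

variable [Abelian C]

open CategoryTheory.Abelian.Pseudoelement
open scoped Pseudoelement

/-- The cokernel of a map `X ⟶ Y` with `X`, `Y` f.p. is f.p. (stated for an
abstract epimorphism `q` with the universal property of the cokernel). -/
lemma aux_exact_inr_fst (A B : C) :
    (ShortComplex.mk (biprod.inr : B ⟶ A ⊞ B) biprod.fst biprod.inr_fst).Exact := by
  apply ShortComplex.exact_of_f_is_kernel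
  refine KernelFork.IsLimit.ofι _ _ (fun {W} k hk => k ≫ biprod.snd) ?_ ?_
  · intro W k hk
    apply biprod.hom_ext
    · simp [hk]
    · simp
  · intro W k hk m hm
    dsimp only at hm ⊢
    rw [← hm, Category.assoc, biprod.inr_snd, Category.comp_id]

lemma coker_lift_shortExact {A B C' X : C} {i : A ⟶ B} {p : B ⟶ C'} {w0 : i ≫ p = 0}
    (hSE : (ShortComplex.mk i p w0).ShortExact) (a : A ⟶ X) :
    (ShortComplex.mk (biprod.inr ≫ cokernel.π (biprod.lift i (-a)))
      (cokernel.desc (biprod.lift i (-a)) (biprod.desc p 0)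
        (by rw [biprod.lift_desc, w0]; simp))
      (by rw [Category.assoc, cokernel.π_desc, biprod.inr_desc])).ShortExact := by
  haveI hmono_i : Mono i := hSE.mono_f
  haveI hepi_p : Epi p := hSE.epi_g
  set τ : A ⟶ B ⊞ X := biprod.lift i (-a) with hτ
  have hexτ : (ShortComplex.mk τ (cokernel.π τ) (cokernel.condition τ)).Exact :=
    ShortComplex.exact_of_g_is_cokernel _ (cokernelIsCokernel τ)
  have hexip := hSE.exact
  have hτfst : τ ≫ biprod.fst = i := by simp [hτ]
  have hτπ : τ ≫ cokernel.π τ = 0 := cokernel.condition τ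
  have hmono : Mono (biprod.inr ≫ cokernel.π τ) := by
    apply mono_of_zero_of_map_zero
    intro ξ hξ
    have h1 : pseudoApply (cokernel.π τ) (pseudoApply biprod.inr ξ) = 0 := by
      rw [← Abelian.Pseudoelement.comp_apply]; exact hξ
    obtain ⟨α, hα⟩ := pseudo_exact_of_exact hexτ _ h1
    have hiα : pseudoApply i α = 0 := by
      have h2 := congrArg (pseudoApply biprod.fst) hα
      rw [← Abelian.Pseudoelement.comp_apply, ← Abelian.Pseudoelement.comp_apply, hτfst, biprod.inr_fst] at h2
      rw [h2, Abelian.Pseudoelement.zero_apply]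
    have hα0 : α = 0 := zero_of_map_zero i (pseudo_injective_of_mono i) α hiα
    have hz : pseudoApply (biprod.inr : X ⟶ B ⊞ X) ξ = 0 := by
      rw [← hα, hα0, apply_zero]
    exact zero_of_map_zero _ (pseudo_injective_of_mono (biprod.inr : X ⟶ B ⊞ X)) ξ hz
  have hepi : Epi (cokernel.desc τ (biprod.desc p 0)
      (by rw [biprod.lift_desc, w0]; simp)) := by
    apply epi_of_epi_fac (f := (biprod.inl : B ⟶ B ⊞ X) ≫ cokernel.π τ) (h := p)
    rw [Category.assoc, cokernel.π_desc, biprod.inl_desc]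
  have hdesc0 : cokernel.π τ ≫ cokernel.desc τ (biprod.desc p 0)
      (by rw [biprod.lift_desc, w0]; simp) =
      biprod.fst ≫ p := by
    rw [cokernel.π_desc]
    apply biprod.hom_ext'
    · simp
    · simp
  have hexact : (ShortComplex.mk (biprod.inr ≫ cokernel.π τ)
      (cokernel.desc τ (biprod.desc p 0)
        (by rw [biprod.lift_desc, w0]; simp))
      (by rw [Category.assoc, cokernel.π_desc, biprod.inr_desc])).Exact := by
    apply exact_of_pseudo_exact
    intro b hb
    obtain ⟨ω, hω⟩ := pseudo_surjective_of_epi (cokernel.π τ) b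
    have h1 : pseudoApply p (pseudoApply biprod.fst ω) = 0 := by
      rw [← Abelian.Pseudoelement.comp_apply, ← hdesc0, Abelian.Pseudoelement.comp_apply, hω]
      exact hb
    obtain ⟨α, hα⟩ := pseudo_exact_of_exact hexip _ h1
    have h2 : pseudoApply biprod.fst ω = pseudoApply biprod.fst (pseudoApply τ α) := by
      rw [← Abelian.Pseudoelement.comp_apply, hτfst, hα]
    obtain ⟨z, hz1, hz2⟩ := sub_of_eq_image biprod.fst ω (pseudoApply τ α) h2
    have hπz : pseudoApply (cokernel.π τ) z = b := by
      rw [hz2 _ (cokernel.π τ) (by rw [← Abelian.Pseudoelement.comp_apply, hτπ, Abelian.Pseudoelement.zero_apply]), hω]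
    obtain ⟨ξ, hξ⟩ := pseudo_exact_of_exact (aux_exact_inr_fst B X) z hz1
    exact ⟨ξ, by rw [Abelian.Pseudoelement.comp_apply, hξ, hπz]⟩
  exact ShortComplex.ShortExact.mk' hexact hmono hepi

lemma fp_of_cokernel {X Y Q : C} (f : X ⟶ Y) (q : Y ⟶ Q) (hfq : f ≫ q = 0) [Epi q]
    (hdesc : ∀ {Z : C} (z : Y ⟶ Z), f ≫ z = 0 → ∃ u : Q ⟶ Z, q ≫ u = z)
    (hX : FinitelyPresented X) (hY : FinitelyPresented Y) : FinitelyPresented Q := by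
  apply finitelyPresented_of_exists
  intro J _ _ D c hc
  constructor
  · intro φ
    obtain ⟨j, g, hg⟩ := hY.factor hc (q ≫ φ)
    obtain ⟨k, u, u', he⟩ := hX.eq hc (f ≫ g) 0
      (by rw [zero_comp, Category.assoc, hg, ← Category.assoc, hfq, zero_comp])
    rw [zero_comp] at he
    obtain ⟨ubar, hubar⟩ := hdesc (g ≫ D.map u) (by rw [← Category.assoc, he])
    refine ⟨k, ubar, (cancel_epi q).1 ?_⟩
    rw [← Category.assoc, hubar, Category.assoc, c.w, hg]
  · intro j j' g g' h
    obtain ⟨k, u, u', he⟩ := hY.eq hc (q ≫ g) (q ≫ g')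
      (by rw [Category.assoc, Category.assoc, h])
    rw [Category.assoc, Category.assoc] at he
    exact ⟨k, u, u', (cancel_epi q).1 he⟩

lemma snake_kernels {A B C' D : C} {j : A ⟶ B} {p : B ⟶ C'} {wjp : j ≫ p = 0}
    (hSE : (ShortComplex.mk j p wjp).ShortExact) (h : B ⟶ D)
    (hbar : C' ⟶ cokernel (j ≫ h)) (hcomm : p ≫ hbar = h ≫ cokernel.π (j ≫ h)) :
    (ShortComplex.mk
      (kernel.lift h (kernel.ι (j ≫ h) ≫ j)
        (by rw [Category.assoc, kernel.condition]))
      (kernel.lift hbar (kernel.ι h ≫ p)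
        (by rw [Category.assoc, hcomm, ← Category.assoc, kernel.condition, zero_comp]))
      (by
        apply (cancel_mono (kernel.ι hbar)).1
        rw [Category.assoc, kernel.lift_ι, ← Category.assoc, kernel.lift_ι,
          Category.assoc, wjp, comp_zero, zero_comp])).ShortExact := by
  haveI hmono_j : Mono j := hSE.mono_f
  haveI hepi_p : Epi p := hSE.epi_g
  have hexjp := hSE.exact
  have hexkerh : (ShortComplex.mk (kernel.ι h) h (kernel.condition h)).Exact :=
    ShortComplex.exact_of_f_is_kernel _ (kernelIsKernel h)
  have hexkerjh : (ShortComplex.mk (kernel.ι (j ≫ h)) (j ≫ h) (kernel.condition _)).Exact :=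
    ShortComplex.exact_of_f_is_kernel _ (kernelIsKernel _)
  have hexcokjh : (ShortComplex.mk (j ≫ h) (cokernel.π (j ≫ h)) (cokernel.condition _)).Exact :=
    ShortComplex.exact_of_g_is_cokernel _ (cokernelIsCokernel _)
  set l1 : kernel (j ≫ h) ⟶ kernel h :=
    kernel.lift h (kernel.ι (j ≫ h) ≫ j) (by rw [Category.assoc, kernel.condition]) with hl1
  set l2 : kernel h ⟶ kernel hbar :=
    kernel.lift hbar (kernel.ι h ≫ p)
      (by rw [Category.assoc, hcomm, ← Category.assoc, kernel.condition, zero_comp]) with hl2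
  have hl1ι : l1 ≫ kernel.ι h = kernel.ι (j ≫ h) ≫ j := kernel.lift_ι _ _ _
  have hl2ι : l2 ≫ kernel.ι hbar = kernel.ι h ≫ p := kernel.lift_ι _ _ _
  have hmono : Mono l1 := by
    have : Mono (l1 ≫ kernel.ι h) := by rw [hl1ι]; exact mono_comp _ _
    exact mono_of_mono l1 (kernel.ι h)
  have hepi : Epi l2 := by
    apply epi_of_pseudo_surjective
    intro ξ
    obtain ⟨b, hb⟩ := pseudo_surjective_of_epi p (pseudoApply (kernel.ι hbar) ξ)
    have h1 : pseudoApply (cokernel.π (j ≫ h)) (pseudoApply h b) = 0 := by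
      rw [← Abelian.Pseudoelement.comp_apply, ← hcomm, Abelian.Pseudoelement.comp_apply, hb,
        ← Abelian.Pseudoelement.comp_apply, kernel.condition, Abelian.Pseudoelement.zero_apply]
    obtain ⟨t, ht⟩ := pseudo_exact_of_exact hexcokjh _ h1
    replace ht : pseudoApply (j ≫ h) t = pseudoApply h b := ht
    have h2 : pseudoApply h b = pseudoApply h (pseudoApply j t) := by
      rw [← Abelian.Pseudoelement.comp_apply, ht]
    obtain ⟨z, hz1, hz2⟩ := sub_of_eq_image h b (pseudoApply j t) h2
    obtain ⟨y, hy⟩ := pseudo_exact_of_exact hexkerh z hz1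
    replace hy : pseudoApply (kernel.ι h) y = z := hy
    refine ⟨y, pseudo_injective_of_mono (kernel.ι hbar) ?_⟩
    show pseudoApply (kernel.ι hbar) (pseudoApply l2 y) = pseudoApply (kernel.ι hbar) ξ
    rw [← Abelian.Pseudoelement.comp_apply, hl2ι, Abelian.Pseudoelement.comp_apply, hy]
    have hpz : pseudoApply p z = pseudoApply p b := by
      apply hz2
      rw [← Abelian.Pseudoelement.comp_apply, wjp, Abelian.Pseudoelement.zero_apply]
    rw [hpz, hb]
  have hexact : (ShortComplex.mk l1 l2 (by
      apply (cancel_mono (kernel.ι hbar)).1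
      rw [Category.assoc, hl2ι, ← Category.assoc, hl1ι,
        Category.assoc, wjp, comp_zero, zero_comp])).Exact := by
    apply exact_of_pseudo_exact
    intro x hx
    replace hx : pseudoApply l2 x = 0 := hx
    have h1 : pseudoApply p (pseudoApply (kernel.ι h) x) = 0 := by
      rw [← Abelian.Pseudoelement.comp_apply, ← hl2ι, Abelian.Pseudoelement.comp_apply, hx,
        apply_zero]
    obtain ⟨τ, hτ⟩ := pseudo_exact_of_exact hexjp _ h1
    replace hτ : pseudoApply j τ = pseudoApply (kernel.ι h) x := hτ
    have h2 : pseudoApply (j ≫ h) τ = 0 := by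
      rw [Abelian.Pseudoelement.comp_apply, hτ, ← Abelian.Pseudoelement.comp_apply,
        kernel.condition, Abelian.Pseudoelement.zero_apply]
    obtain ⟨τ', hτ'⟩ := pseudo_exact_of_exact hexkerjh τ h2
    replace hτ' : pseudoApply (kernel.ι (j ≫ h)) τ' = τ := hτ'
    refine ⟨τ', pseudo_injective_of_mono (kernel.ι h) ?_⟩
    show pseudoApply (kernel.ι h) (pseudoApply l1 τ') = pseudoApply (kernel.ι h) x
    rw [← Abelian.Pseudoelement.comp_apply, hl1ι, Abelian.Pseudoelement.comp_apply, hτ', hτ]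
  exact ShortComplex.ShortExact.mk' hexact hmono hepi
set_option maxHeartbeats 1600000 in
lemma fp_extension {A B C' : C} {i : A ⟶ B} {p : B ⟶ C'} {w0 : i ≫ p = 0}
    (hSE : (ShortComplex.mk i p w0).ShortExact)
    (hA : FinitelyPresented A) (hC : FinitelyPresented C') :
    FinitelyPresented B := by
  haveI hmono_i : Mono i := hSE.mono_f
  haveI hepi_p : Epi p := hSE.epi_g
  apply finitelyPresented_of_exists
  intro J _ _ D c hc
  constructor
  · -- surjectivity
    intro φ
    obtain ⟨j, a, ha⟩ := hA.factor hc (i ≫ φ)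
    let ι' : ∀ k : J, D.obj k ⟶ c.pt := fun k => c.ι.app k
    have hι'w : ∀ {k k' : J} (f : k ⟶ k'), D.map f ≫ ι' k' = ι' k := fun f => c.w f
    have ha' : a ≫ ι' j = i ≫ φ := ha
    -- helper lemmas about binary biproduct maps
    have hmapid : ∀ (W : C), biprod.map (𝟙 B) (𝟙 W) = 𝟙 (B ⊞ W) := by
      intro W; apply biprod.hom_ext <;> simp
    have hmapcomp : ∀ {W X Y : C} (f : W ⟶ X) (g : X ⟶ Y),
        biprod.map (𝟙 B) f ≫ biprod.map (𝟙 B) g = biprod.map (𝟙 B) (f ≫ g) := by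
      intros; apply biprod.hom_ext <;> simp
    have hinl : ∀ {W X : C} (h : W ⟶ X) {Z : C} (q : B ⊞ X ⟶ Z),
        biprod.inl ≫ biprod.map (𝟙 B) h ≫ q = biprod.inl ≫ q := by
      intros; rw [← Category.assoc, biprod.inl_map, Category.id_comp]
    have hinr : ∀ {W X : C} (h : W ⟶ X) {Z : C} (q : B ⊞ X ⟶ Z),
        biprod.inr ≫ biprod.map (𝟙 B) h ≫ q = h ≫ biprod.inr ≫ q := by
      intros; rw [← Category.assoc, biprod.inr_map, Category.assoc]
    have hliftq : ∀ {W Z : C} (f : A ⟶ B) (g : A ⟶ W) (q : B ⊞ W ⟶ Z),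
        biprod.lift f g ≫ q = f ≫ biprod.inl ≫ q + g ≫ biprod.inr ≫ q := by
      intros; rw [biprod.lift_eq, Preadditive.add_comp, Category.assoc, Category.assoc]
    -- the diagram of pushouts over `Under j`
    let τ : ∀ x : Under j, A ⟶ B ⊞ D.obj x.right :=
      fun x => biprod.lift i (-(a ≫ D.map x.hom))
    have hτw : ∀ {x y : Under j} (g : x ⟶ y),
        τ x ≫ biprod.map (𝟙 B) (D.map g.right) = τ y := by
      intro x y g
      apply biprod.hom_ext
      · simp [τ]
      · simp [τ, ← D.map_comp, Under.w g]
    let E : Under j ⥤ C :=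
      { obj := fun x => cokernel (τ x)
        map := fun {x y} g => cokernel.desc (τ x)
          (biprod.map (𝟙 B) (D.map g.right) ≫ cokernel.π (τ y))
          (by rw [← Category.assoc, hτw g, cokernel.condition])
        map_id := fun x => by
          apply (cancel_epi (cokernel.π (τ x))).1
          rw [cokernel.π_desc, Category.comp_id]
          have h1 : (𝟙 x : x ⟶ x).right = 𝟙 x.right := rfl
          rw [h1, D.map_id, hmapid, Category.id_comp]
        map_comp := fun {x y z} g g' => by
          apply (cancel_epi (cokernel.π (τ x))).1
          rw [cokernel.π_desc, ← Category.assoc, cokernel.π_desc, Category.assoc,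
            cokernel.π_desc, ← Category.assoc, hmapcomp, ← D.map_comp]
          rfl }
    have hEmapπ : ∀ {x y : Under j} (g : x ⟶ y),
        cokernel.π (τ x) ≫ E.map g = biprod.map (𝟙 B) (D.map g.right) ≫ cokernel.π (τ y) :=
      fun g => cokernel.π_desc _ _ _
    -- the "pushout at infinity"
    let τ' : A ⟶ B ⊞ c.pt := biprod.lift i (-(i ≫ φ))
    have hτ' : ∀ x : Under j, τ x ≫ biprod.map (𝟙 B) (ι' x.right) = τ' := by
      intro x
      apply biprod.hom_ext
      · simp [τ, τ']
      · show (τ x ≫ biprod.map (𝟙 B) (ι' x.right)) ≫ biprod.snd = τ' ≫ biprod.snd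
        rw [Category.assoc, biprod.map_snd, ← Category.assoc, biprod.lift_snd,
          biprod.lift_snd, Preadditive.neg_comp, neg_inj, Category.assoc,
          hι'w (k := j) (k' := x.right) x.hom, ha']
    let appf : ∀ x : Under j, cokernel (τ x) ⟶ cokernel τ' := fun x =>
      cokernel.desc (τ x) (biprod.map (𝟙 B) (ι' x.right) ≫ cokernel.π τ')
        (by rw [← Category.assoc, hτ' x, cokernel.condition])
    have happf : ∀ x : Under j,
        cokernel.π (τ x) ≫ appf x = biprod.map (𝟙 B) (ι' x.right) ≫ cokernel.π τ' :=
      fun x => cokernel.π_desc _ _ _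
    have happfw : ∀ (x : Under j) {Z : C} (w : cokernel τ' ⟶ Z),
        cokernel.π (τ x) ≫ appf x ≫ w =
          biprod.map (𝟙 B) (ι' x.right) ≫ cokernel.π τ' ≫ w := by
      intro x Z w; rw [← Category.assoc, happf x, Category.assoc]
    let ecoc : Cocone E :=
      { pt := cokernel τ'
        ι :=
          { app := appf
            naturality := fun x y g => by
              have h5 : E.map g ≫ appf y = appf x := by
                apply (cancel_epi (cokernel.π (τ x))).1
                rw [← Category.assoc, hEmapπ g, Category.assoc, happf y, happf x,
                  ← Category.assoc, hmapcomp, hι'w (k := x.right) (k' := y.right) g.right]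
              exact h5.trans (Category.comp_id _).symm } }
    -- `ecoc` is a colimit cocone
    have hcW : IsColimit (c.whisker (Under.forget j)) :=
      (Functor.Final.isColimitWhiskerEquiv (Under.forget j) c).symm hc
    let x₀ : Under j := Under.mk (𝟙 j)
    have hτx₀ : τ x₀ = biprod.lift i (-a) := by
      have h1 : x₀.hom = 𝟙 j := rfl
      rw [show τ x₀ = biprod.lift i (-(a ≫ D.map x₀.hom)) from rfl, h1, D.map_id,
        Category.comp_id]
      rfl
    have hn : ∀ (sc : Cocone E) {x y : Under j} (g : x ⟶ y),
        biprod.map (𝟙 B) (D.map g.right) ≫ cokernel.π (τ y) ≫ sc.ι.app y =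
          cokernel.π (τ x) ≫ sc.ι.app x := by
      intro sc x y g
      rw [← sc.w g, ← Category.assoc, ← hEmapπ g, Category.assoc]
    have hb : ∀ (sc : Cocone E) (x : Under j),
        biprod.inl ≫ cokernel.π (τ x) ≫ sc.ι.app x =
          biprod.inl ≫ cokernel.π (τ x₀) ≫ sc.ι.app x₀ := by
      intro sc x
      rw [← hn sc (IsFiltered.leftToMax x x₀), ← hn sc (IsFiltered.rightToMax x x₀),
        hinl, hinl]
    let mkd : ∀ (sc : Cocone E), c.pt ⟶ sc.pt := fun sc => hcW.desc
      { pt := sc.pt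
        ι :=
          { app := fun x => biprod.inr ≫ cokernel.π (τ x) ≫ sc.ι.app x
            naturality := fun x y g => by
              have h6 : D.map g.right ≫ biprod.inr ≫ cokernel.π (τ y) ≫ sc.ι.app y =
                  biprod.inr ≫ cokernel.π (τ x) ≫ sc.ι.app x := by
                rw [← hn sc g, hinr]
              exact h6.trans (Category.comp_id _).symm } }
    have hmkd : ∀ (sc : Cocone E) (x : Under j),
        ι' x.right ≫ mkd sc = biprod.inr ≫ cokernel.π (τ x) ≫ sc.ι.app x :=
      fun sc x => hcW.fac _ x
    have hdesc0 : ∀ (sc : Cocone E),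
        τ' ≫ biprod.desc (biprod.inl ≫ cokernel.π (τ x₀) ≫ sc.ι.app x₀) (mkd sc) = 0 := by
      intro sc
      have hmkd₀ : ι' j ≫ mkd sc = biprod.inr ≫ cokernel.π (τ x₀) ≫ sc.ι.app x₀ :=
        hmkd sc x₀
      rw [show (τ' : A ⟶ B ⊞ c.pt) = biprod.lift i (-(i ≫ φ)) from rfl, hliftq,
        biprod.inl_desc, biprod.inr_desc, Preadditive.neg_comp, add_neg_eq_zero,
        ← ha', Category.assoc, hmkd₀]
      have h2 : biprod.lift i (-a) ≫ cokernel.π (τ x₀) ≫ sc.ι.app x₀ = 0 := by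
        rw [← hτx₀, ← Category.assoc, cokernel.condition, zero_comp]
      rw [hliftq, Preadditive.neg_comp, add_neg_eq_zero] at h2
      exact h2
    let dsc : ∀ sc : Cocone E, cokernel τ' ⟶ sc.pt := fun sc =>
      cokernel.desc τ'
        (biprod.desc (biprod.inl ≫ cokernel.π (τ x₀) ≫ sc.ι.app x₀) (mkd sc)) (hdesc0 sc)
    have hπdsc : ∀ sc : Cocone E, cokernel.π τ' ≫ dsc sc =
        biprod.desc (biprod.inl ≫ cokernel.π (τ x₀) ≫ sc.ι.app x₀) (mkd sc) :=
      fun sc => cokernel.π_desc _ _ _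
    have hfac : ∀ (sc : Cocone E) (x : Under j), appf x ≫ dsc sc = sc.ι.app x := by
      intro sc x
      apply (cancel_epi (cokernel.π (τ x))).1
      rw [← Category.assoc, happf x, Category.assoc, hπdsc sc]
      apply biprod.hom_ext'
      · rw [hinl, biprod.inl_desc]
        exact (hb sc x).symm
      · rw [hinr, biprod.inr_desc, hmkd sc x]
    have hcE : IsColimit ecoc :=
      { desc := dsc
        fac := fun sc x => hfac sc x
        uniq := fun sc m hm => by
          have hm' : ∀ x : Under j, appf x ≫ m = sc.ι.app x := hm
          apply (cancel_epi (cokernel.π τ')).1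
          rw [hπdsc sc]
          apply biprod.hom_ext'
          · rw [biprod.inl_desc]
            calc biprod.inl ≫ cokernel.π τ' ≫ m
                = biprod.inl ≫ biprod.map (𝟙 B) (ι' x₀.right) ≫ cokernel.π τ' ≫ m :=
                  (hinl _ _).symm
              _ = biprod.inl ≫ cokernel.π (τ x₀) ≫ appf x₀ ≫ m := by rw [happfw x₀ m]
              _ = biprod.inl ≫ cokernel.π (τ x₀) ≫ sc.ι.app x₀ := by rw [hm' x₀]
          · rw [biprod.inr_desc]
            apply hcW.hom_ext
            intro x
            show ι' x.right ≫ biprod.inr ≫ cokernel.π τ' ≫ m = ι' x.right ≫ mkd sc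
            rw [hmkd sc x, ← hinr (ι' x.right) (cokernel.π τ' ≫ m), ← happfw x m, hm' x] }
    -- the short exact sequence `0 → c.pt → cokernel τ' → C' → 0` and its splitting
    have hSE' := coker_lift_shortExact hSE (i ≫ φ)
    set v' : c.pt ⟶ cokernel τ' := biprod.inr ≫ cokernel.π τ' with hv'def
    set q' : cokernel τ' ⟶ C' := cokernel.desc τ' (biprod.desc p 0)
      (by rw [show (τ' : A ⟶ B ⊞ c.pt) = biprod.lift i (-(i ≫ φ)) from rfl,
        biprod.lift_desc, w0]; simp) with hq'def
    haveI hepiq' : Epi q' := hSE'.epi_g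
    have hπq' : cokernel.π τ' ≫ q' = biprod.desc p 0 := cokernel.π_desc _ _ _
    have hv'q' : v' ≫ q' = 0 := by
      rw [hv'def, Category.assoc, hπq', biprod.inr_desc]
    let ρ : cokernel τ' ⟶ c.pt := cokernel.desc τ' (biprod.desc φ (𝟙 c.pt))
      (by rw [show (τ' : A ⟶ B ⊞ c.pt) = biprod.lift i (-(i ≫ φ)) from rfl,
        biprod.lift_desc]; simp)
    have hπρ : cokernel.π τ' ≫ ρ = biprod.desc φ (𝟙 c.pt) := cokernel.π_desc _ _ _
    have hv'ρ : v' ≫ ρ = 𝟙 c.pt := by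
      rw [hv'def, Category.assoc, hπρ, biprod.inr_desc]
    obtain ⟨σ, hσ⟩ := CokernelCofork.IsColimit.desc' hSE'.gIsCokernel
      (𝟙 (cokernel τ') - ρ ≫ v')
      (by
        show v' ≫ (𝟙 (cokernel τ') - ρ ≫ v') = 0
        rw [Preadditive.comp_sub, Category.comp_id, ← Category.assoc, hv'ρ,
          Category.id_comp, sub_self])
    simp only [Cofork.π_ofπ] at hσ
    replace hσ : q' ≫ σ = 𝟙 (cokernel τ') - ρ ≫ v' := hσ
    have hσq' : σ ≫ q' = 𝟙 C' := by
      apply (cancel_epi q').1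
      rw [← Category.assoc, hσ, Preadditive.sub_comp, Category.id_comp, Category.assoc,
        hv'q', comp_zero, sub_zero, Category.comp_id]
    -- factor σ through a finite stage
    obtain ⟨x, σx, hσx⟩ := hC.factor (D := E) (c := ecoc) hcE σ
    have hσx' : σx ≫ appf x = σ := hσx
    set qx : cokernel (τ x) ⟶ C' := cokernel.desc (τ x) (biprod.desc p 0)
      (by rw [show τ x = biprod.lift i (-(a ≫ D.map x.hom)) from rfl,
        biprod.lift_desc, w0]; simp) with hqxdef
    have hπqx : cokernel.π (τ x) ≫ qx = biprod.desc p 0 := cokernel.π_desc _ _ _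
    have happq : appf x ≫ q' = qx := by
      apply (cancel_epi (cokernel.π (τ x))).1
      rw [← Category.assoc, happf x, Category.assoc, hπq', hπqx]
      apply biprod.hom_ext'
      · rw [hinl, biprod.inl_desc, biprod.inl_desc]
      · rw [hinr, biprod.inr_desc, comp_zero, biprod.inr_desc]
    have hσxqx : σx ≫ qx = 𝟙 C' := by
      rw [← happq, ← Category.assoc, hσx', hσq']
    -- the short exact sequence at the finite stage, and the partial retraction
    have hSEx := coker_lift_shortExact hSE (a ≫ D.map x.hom)
    obtain ⟨πhat, hπhat⟩ := KernelFork.IsLimit.lift' hSEx.fIsKernel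
      (𝟙 (cokernel (τ x)) - qx ≫ σx)
      (by
        show (𝟙 (cokernel (τ x)) - qx ≫ σx) ≫ qx = 0
        rw [Preadditive.sub_comp, Category.id_comp, Category.assoc, hσxqx,
          Category.comp_id, sub_self])
    simp only [Fork.ι_ofι] at hπhat
    replace hπhat : πhat ≫ (biprod.inr ≫ cokernel.π (τ x)) =
      𝟙 (cokernel (τ x)) - qx ≫ σx := hπhat
    -- the structure maps out of the finite stage pushout
    have hupqw : ∀ {Z : C} (w : C' ⟶ Z),
        biprod.inl ≫ cokernel.π (τ x) ≫ qx ≫ w = p ≫ w := by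
      intro Z w
      have h7 : cokernel.π (τ x) ≫ qx ≫ w = biprod.desc p 0 ≫ w := by
        rw [← Category.assoc, hπqx]
      rw [h7, ← Category.assoc, biprod.inl_desc]
    have hvρ : biprod.inr ≫ cokernel.π (τ x) ≫ appf x ≫ ρ = ι' x.right := by
      rw [happfw x ρ, hπρ, hinr, biprod.inr_desc, Category.comp_id]
    have huφ : biprod.inl ≫ cokernel.π (τ x) ≫ appf x ≫ ρ = φ := by
      rw [happfw x ρ, hπρ, hinl, biprod.inl_desc]
    -- the key identity
    have hφ : φ = (biprod.inl ≫ cokernel.π (τ x) ≫ πhat) ≫ ι' x.right +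
        p ≫ (σx ≫ appf x ≫ ρ) := by
      have h4 : πhat ≫ (biprod.inr ≫ cokernel.π (τ x)) + qx ≫ σx =
          𝟙 (cokernel (τ x)) := by
        rw [hπhat]; abel
      calc φ = biprod.inl ≫ cokernel.π (τ x) ≫ appf x ≫ ρ := huφ.symm
        _ = biprod.inl ≫ cokernel.π (τ x) ≫
              ((πhat ≫ (biprod.inr ≫ cokernel.π (τ x)) + qx ≫ σx) ≫ appf x ≫ ρ) := by
            rw [h4, Category.id_comp]
        _ = (biprod.inl ≫ cokernel.π (τ x) ≫ πhat) ≫ ι' x.right +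
              p ≫ (σx ≫ appf x ≫ ρ) := by
            rw [Preadditive.add_comp, Preadditive.comp_add, Preadditive.comp_add]
            simp only [Category.assoc]
            rw [hupqw (σx ≫ appf x ≫ ρ)]
            show biprod.inl ≫ cokernel.π (τ x) ≫ πhat ≫
                biprod.inr ≫ cokernel.π (τ x) ≫ appf x ≫ ρ + p ≫ σx ≫ appf x ≫ ρ =
              biprod.inl ≫ cokernel.π (τ x) ≫ πhat ≫ ι' x.right + p ≫ σx ≫ appf x ≫ ρ
            exact congrArg₂ (· + ·)
              (congrArg (fun t => biprod.inl ≫ cokernel.π (τ x) ≫ πhat ≫ t) hvρ) rfl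
    -- factor the stray map `C' ⟶ c.pt` and conclude
    obtain ⟨m, c', hc'⟩ := hC.factor hc (σx ≫ appf x ≫ ρ)
    replace hc' : c' ≫ ι' m = σx ≫ appf x ≫ ρ := hc'
    refine ⟨IsFiltered.max x.right m,
      (biprod.inl ≫ cokernel.π (τ x) ≫ πhat) ≫ D.map (IsFiltered.leftToMax x.right m) +
        p ≫ c' ≫ D.map (IsFiltered.rightToMax x.right m), ?_⟩
    show ((biprod.inl ≫ cokernel.π (τ x) ≫ πhat) ≫ D.map (IsFiltered.leftToMax x.right m) +
        p ≫ c' ≫ D.map (IsFiltered.rightToMax x.right m)) ≫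
        ι' (IsFiltered.max x.right m) = φ
    have hl1 : D.map (IsFiltered.leftToMax x.right m) ≫ ι' (IsFiltered.max x.right m) =
        ι' x.right := hι'w _
    have hl2 : D.map (IsFiltered.rightToMax x.right m) ≫ ι' (IsFiltered.max x.right m) =
        ι' m := hι'w _
    rw [Preadditive.add_comp]
    simp only [Category.assoc]
    rw [hl1, hl2, hc', hφ]
    simp only [Category.assoc]
  · -- injectivity
    intro j j' b b' hbb
    obtain ⟨k₁, u, u', he⟩ := hA.eq hc (i ≫ b) (i ≫ b')
      (by rw [Category.assoc, Category.assoc, hbb])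
    have hi0 : i ≫ (b ≫ D.map u - b' ≫ D.map u') = 0 := by
      rw [Preadditive.comp_sub, ← Category.assoc, ← Category.assoc, he, sub_self]
    obtain ⟨cbar, hcbar⟩ := CokernelCofork.IsColimit.desc' hSE.gIsCokernel
      (b ≫ D.map u - b' ≫ D.map u') hi0
    simp only [Cofork.π_ofπ] at hcbar
    have h0 : cbar ≫ c.ι.app k₁ = 0 ≫ c.ι.app k₁ := by
      apply (cancel_epi p).1
      rw [← Category.assoc, hcbar, zero_comp, comp_zero, Preadditive.sub_comp,
        Category.assoc, Category.assoc, c.w, c.w, hbb, sub_self]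
    obtain ⟨k₂, v, v', hv⟩ := hC.eq hc cbar 0 h0
    rw [zero_comp] at hv
    refine ⟨k₂, u ≫ v, u' ≫ v, ?_⟩
    have hz : (b ≫ D.map u - b' ≫ D.map u') ≫ D.map v = 0 := by
      rw [← hcbar, Category.assoc, hv, comp_zero]
    rw [Preadditive.sub_comp, Category.assoc, Category.assoc, ← D.map_comp, ← D.map_comp] at hz
    exact sub_eq_zero.1 hz

end Abelian

section Torsion

variable [Abelian C] {T F : C → Prop}

lemma torsion_hom_eq_zero (htp : IsTorsionPair T F) {X Y : C} (hX : T X) (hY : F Y)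
    (f : X ⟶ Y) : f = 0 :=
  (htp.torsion_iff X).1 hX Y hY f

lemma torsionFree_of_mono (htp : IsTorsionPair T F) {X Y : C} (m : X ⟶ Y) [Mono m]
    (hY : F Y) : F X := by
  rw [htp.torsionFree_iff]
  intro Z hZ f
  have h1 : f ≫ m = 0 := (htp.torsion_iff Z).1 hZ Y hY (f ≫ m)
  exact (cancel_mono m).1 (by rw [h1, zero_comp])

lemma torsion_of_epi (htp : IsTorsionPair T F) {X Y : C} (e : X ⟶ Y) [Epi e]
    (hX : T X) : T Y := by
  rw [htp.torsion_iff]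
  intro Z hZ f
  have h1 : e ≫ f = 0 := (htp.torsion_iff X).1 hX Z hZ (e ≫ f)
  exact (cancel_epi e).1 (by rw [h1, comp_zero])

lemma torsionFree_of_iso (htp : IsTorsionPair T F) {X Y : C} (e : X ≅ Y) (hY : F Y) :
    F X := by
  rw [htp.torsionFree_iff]
  intro Z hZ f
  have h1 : f ≫ e.hom = 0 := (htp.torsion_iff Z).1 hZ Y hY (f ≫ e.hom)
  have h2 := congrArg (· ≫ e.inv) h1
  simpa using h2

lemma torsion_of_iso (htp : IsTorsionPair T F) {X Y : C} (e : X ≅ Y) (hX : T X) : T Y :=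
  torsion_of_epi htp e.hom hX

end Torsion

theorem locallyCoherent_iff_torsion_criteria
    [Abelian C] [HasColimits C] [AB5 C]
    (hlfp : ∃ (ι : Type v) (g : ι → C),
      (∀ i, FinitelyPresented (g i)) ∧ ObjectProperty.IsSeparating (fun X => X ∈ Set.range g))
    (T F : C → Prop) (htp : IsTorsionPair T F)
    (hft : ClosedUnderDirectLimits F)
    -- the functorial torsion radical and coradical
    (t s : C ⥤ C) (η : t ⟶ 𝟭 C) (ε : 𝟭 C ⟶ s)
    (w : ∀ X : C, η.app X ≫ ε.app X = 0)
    (hdata : ∀ X : C, T (t.obj X) ∧ F (s.obj X) ∧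
      (ShortComplex.mk (η.app X) (ε.app X) (w X)).ShortExact)
    -- the torsion pair restricts to finitely presented objects
    (hrestrict : ∀ M : C, FinitelyPresented M → FinitelyPresented (t.obj M)) :
    (∀ (X Y : C) (f : X ⟶ Y), FinitelyPresented X → FinitelyPresented Y →
        FinitelyPresented (kernel f)) ↔
      ((∀ (X Y : C) (f : X ⟶ Y), T X → T Y →
          FinitelyPresented X → FinitelyPresented Y →
          FinitelyPresented (kernel f)) ∧
        (∀ (X Y : C) (f : X ⟶ Y), F X → (T Y ∨ F Y) →
          FinitelyPresented X → FinitelyPresented Y →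
          FinitelyPresented (kernel f))) := by
  constructor
  · intro H
    exact ⟨fun X Y f _ _ hX hY => H X Y f hX hY, fun X Y f _ _ hX hY => H X Y f hX hY⟩
  · rintro ⟨H1, H2⟩ M N f hM hN
    obtain ⟨hTtN, hFsN, hseN⟩ := hdata N
    obtain ⟨hTtM, hFsM, hseM⟩ := hdata M
    haveI : Epi (ε.app M) := hseM.epi_g
    haveI : Epi (ε.app N) := hseN.epi_g
    haveI : Mono (η.app N) := hseN.mono_f
    -- the universal property of `ε` as the cokernel of `η`
    have hcokε : ∀ (X : C) {Z : C} (z : X ⟶ Z), η.app X ≫ z = 0 →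
        ∃ u : s.obj X ⟶ Z, ε.app X ≫ u = z := by
      intro X Z z hz
      obtain ⟨u, hu⟩ := CokernelCofork.IsColimit.desc' (hdata X).2.2.gIsCokernel z hz
      exact ⟨u, by simpa using hu⟩
    -- finite presentation of the pieces of `M` and `N`
    have hfptM : FinitelyPresented (t.obj M) := hrestrict M hM
    have hfptN : FinitelyPresented (t.obj N) := hrestrict N hN
    have hfpsM : FinitelyPresented (s.obj M) :=
      fp_of_cokernel (η.app M) (ε.app M) (w M) (fun z hz => hcokε M z hz) hfptM hM
    have hfpsN : FinitelyPresented (s.obj N) :=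
      fp_of_cokernel (η.app N) (ε.app N) (w N) (fun z hz => hcokε N z hz) hfptN hN
    -- Step 1: the composite `g : M ⟶ s N` kills the torsion part of `M`
    set g : M ⟶ s.obj N := f ≫ ε.app N with hgdef
    have hg0 : η.app M ≫ g = 0 :=
      (htp.torsion_iff (t.obj M)).1 hTtM (s.obj N) hFsN (η.app M ≫ g)
    -- Step 2: `kernel g` is an extension of fp objects
    obtain ⟨hbar, hhbar⟩ := hcokε M (g ≫ cokernel.π (η.app M ≫ g))
      (by
        have h1 : (η.app M ≫ g) ≫ cokernel.π (η.app M ≫ g) = 0 :=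
          cokernel.condition (η.app M ≫ g)
        calc η.app M ≫ g ≫ cokernel.π (η.app M ≫ g)
            = (η.app M ≫ g) ≫ cokernel.π (η.app M ≫ g) := (Category.assoc _ _ _).symm
          _ = 0 := h1)
    have wηg : (kernel.ι (η.app M ≫ g) ≫ η.app M) ≫ g = 0 := by
      calc (kernel.ι (η.app M ≫ g) ≫ η.app M) ≫ g
          = kernel.ι (η.app M ≫ g) ≫ η.app M ≫ g := Category.assoc _ _ _
        _ = kernel.ι (η.app M ≫ g) ≫ (η.app M ≫ g) ≫ 𝟙 _ := by
            rw [Category.comp_id]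
        _ = (kernel.ι (η.app M ≫ g) ≫ (η.app M ≫ g)) ≫ 𝟙 _ := (Category.assoc _ _ _).symm
        _ = 0 := by rw [kernel.condition, zero_comp]
    have wεh : (kernel.ι g ≫ ε.app M) ≫ hbar = 0 := by
      have h1 : (kernel.ι g ≫ g) ≫ cokernel.π (η.app M ≫ g) = 0 := by
        rw [kernel.condition, zero_comp]
      calc (kernel.ι g ≫ ε.app M) ≫ hbar
          = kernel.ι g ≫ ε.app M ≫ hbar := Category.assoc _ _ _
        _ = kernel.ι g ≫ g ≫ cokernel.π (η.app M ≫ g) := by rw [hhbar]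
        _ = (kernel.ι g ≫ g) ≫ cokernel.π (η.app M ≫ g) := (Category.assoc _ _ _).symm
        _ = 0 := h1
    let l1 : kernel (η.app M ≫ g) ⟶ kernel g :=
      kernel.lift g (kernel.ι (η.app M ≫ g) ≫ η.app M) wηg
    let l2 : kernel g ⟶ kernel hbar := kernel.lift hbar (kernel.ι g ≫ ε.app M) wεh
    have hl1ι : l1 ≫ kernel.ι g = kernel.ι (η.app M ≫ g) ≫ η.app M := kernel.lift_ι _ _ _
    have hl2ι : l2 ≫ kernel.ι hbar = kernel.ι g ≫ ε.app M := kernel.lift_ι _ _ _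
    have wl12 : l1 ≫ l2 = 0 := by
      apply (cancel_mono (kernel.ι hbar)).1
      rw [zero_comp]
      calc (l1 ≫ l2) ≫ kernel.ι hbar
          = l1 ≫ l2 ≫ kernel.ι hbar := Category.assoc _ _ _
        _ = l1 ≫ kernel.ι g ≫ ε.app M := by rw [hl2ι]
        _ = (l1 ≫ kernel.ι g) ≫ ε.app M := (Category.assoc _ _ _).symm
        _ = (kernel.ι (η.app M ≫ g) ≫ η.app M) ≫ ε.app M := by rw [hl1ι]
        _ = kernel.ι (η.app M ≫ g) ≫ η.app M ≫ ε.app M := Category.assoc _ _ _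
        _ = 0 := by rw [w M, comp_zero]
    have sesg : (ShortComplex.mk l1 l2 wl12).ShortExact := snake_kernels hseM g hbar hhbar
    -- identifications of the ends
    have e1 : kernel (η.app M ≫ g) ≅ t.obj M := kernelIsoOfEq hg0 ≪≫ kernelZeroIsoSource
    have e2 : cokernel (η.app M ≫ g) ≅ s.obj N :=
      cokernelIsoOfEq hg0 ≪≫ cokernelZeroIsoTarget
    have hfpK1 : FinitelyPresented (kernel (η.app M ≫ g)) := hfptM.of_iso e1.symm
    have hTK1 : T (kernel (η.app M ≫ g)) := torsion_of_iso htp e1.symm hTtM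
    have hFcok : F (cokernel (η.app M ≫ g)) := torsionFree_of_iso htp e2 hFsN
    have hfpcok : FinitelyPresented (cokernel (η.app M ≫ g)) := hfpsN.of_iso e2.symm
    have hfpkerhbar : FinitelyPresented (kernel hbar) :=
      H2 (s.obj M) (cokernel (η.app M ≫ g)) hbar hFsM (Or.inr hFcok) hfpsM hfpcok
    have hfpkerg : FinitelyPresented (kernel g) := fp_extension sesg hfpK1 hfpkerhbar
    -- Step 3: the map `h : kernel g ⟶ t N` with `h ≫ η N = ι ≫ f`
    obtain ⟨h, hh⟩ := KernelFork.IsLimit.lift' hseN.fIsKernel (kernel.ι g ≫ f)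
      (by rw [Category.assoc]; exact kernel.condition g)
    replace hh : h ≫ η.app N = kernel.ι g ≫ f := hh
    -- Step 4: `kernel h` is an extension of fp objects
    clear_value l1 l2
    obtain ⟨hbar2, hhbar2⟩ := CokernelCofork.IsColimit.desc' sesg.gIsCokernel
      (h ≫ cokernel.π (l1 ≫ h))
      (by
        show l1 ≫ h ≫ cokernel.π (l1 ≫ h) = 0
        calc l1 ≫ h ≫ cokernel.π (l1 ≫ h)
            = (l1 ≫ h) ≫ cokernel.π (l1 ≫ h) := (Category.assoc _ _ _).symm
          _ = 0 := cokernel.condition (l1 ≫ h))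
    replace hhbar2 : l2 ≫ hbar2 = h ≫ cokernel.π (l1 ≫ h) := hhbar2
    have ses2 := snake_kernels sesg h hbar2 hhbar2
    have hfpker1 : FinitelyPresented (kernel (l1 ≫ h)) :=
      H1 (kernel (η.app M ≫ g)) (t.obj N) (l1 ≫ h) hTK1 hTtN hfpK1 hfptN
    have hFkerhbar : F (kernel hbar) := torsionFree_of_mono htp (kernel.ι hbar) hFsM
    have hTcok2 : T (cokernel (l1 ≫ h)) := torsion_of_epi htp (cokernel.π (l1 ≫ h)) hTtN
    have hfpcok2 : FinitelyPresented (cokernel (l1 ≫ h)) :=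
      fp_of_cokernel (l1 ≫ h) (cokernel.π (l1 ≫ h)) (cokernel.condition _)
        (fun z hz => ⟨cokernel.desc _ z hz, cokernel.π_desc _ _ _⟩) hfpK1 hfptN
    have hfpker2 : FinitelyPresented (kernel hbar2) :=
      H2 (kernel hbar) (cokernel (l1 ≫ h)) hbar2 hFkerhbar (Or.inl hTcok2)
        hfpkerhbar hfpcok2
    have hfpkerh : FinitelyPresented (kernel h) := fp_extension ses2 hfpker1 hfpker2
    -- Step 5: `kernel f ≅ kernel h`
    have hψ0w : kernel.ι f ≫ g = 0 := by
      show kernel.ι f ≫ f ≫ ε.app N = 0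
      rw [← Category.assoc, kernel.condition, zero_comp]
    let ψ0 : kernel f ⟶ kernel g := kernel.lift g (kernel.ι f) hψ0w
    have hψ0ι : ψ0 ≫ kernel.ι g = kernel.ι f := kernel.lift_ι _ _ _
    have hψ0h : ψ0 ≫ h = 0 := by
      apply (cancel_mono (η.app N)).1
      rw [Category.assoc, hh, ← Category.assoc, hψ0ι, kernel.condition, zero_comp]
    let ψ1 : kernel f ⟶ kernel h := kernel.lift h ψ0 hψ0h
    have hψ1ι : ψ1 ≫ kernel.ι h = ψ0 := kernel.lift_ι _ _ _
    have hφ1w : (kernel.ι h ≫ kernel.ι g) ≫ f = 0 := by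
      rw [Category.assoc, ← hh, ← Category.assoc, kernel.condition, zero_comp]
    let φ1 : kernel h ⟶ kernel f := kernel.lift f (kernel.ι h ≫ kernel.ι g) hφ1w
    have hφ1ι : φ1 ≫ kernel.ι f = kernel.ι h ≫ kernel.ι g := kernel.lift_ι _ _ _
    have h12 : ψ1 ≫ φ1 = 𝟙 (kernel f) := by
      apply (cancel_mono (kernel.ι f)).1
      rw [Category.assoc, hφ1ι, ← Category.assoc, hψ1ι, hψ0ι, Category.id_comp]
    have h21 : φ1 ≫ ψ1 = 𝟙 (kernel h) := by
      apply (cancel_mono (kernel.ι h)).1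
      rw [Category.assoc, hψ1ι, Category.id_comp]
      apply (cancel_mono (kernel.ι g)).1
      rw [Category.assoc, hψ0ι, hφ1ι]
    exact hfpkerh.of_iso ⟨φ1, ψ1, h21, h12⟩
end

section
/- Let G be a Grothendieck category with a quasi-cotilting object Q and associated torsion pair (T, F) with F = Cogen(Q). Then the full subcategory Cogen-bar(Q) of quotients of objects of Cogen(Q) is an abelian exact subcategory of G closed under subobjects, quotients and coproducts, and it is itself a Grothendieck category in which Q is a 1-cotilting object, i.e. Cogen(Q) = Ker Ext¹_{Cogen-bar(Q)}(-, Q). -/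
/-!
STATEMENT 17: Let `G` be a Grothendieck category with a quasi-cotilting
object `Q` and associated torsion pair `(T, F)` with `F = Cogen(Q)`.  Then
the full subcategory `Cogen-bar(Q)` of quotients of objects of `Cogen(Q)` is
an abelian exact subcategory of `G` closed under subobjects, quotients and
coproducts, and it is itself a Grothendieck category (it is closed under the
colimits of `G` and has a generator) in which `Q` is a 1-cotilting object:
for `M ∈ Cogen-bar(Q)` one has `M ∈ Cogen(Q)` iff every short exact sequence
`0 → Q → E → M → 0` with `E ∈ Cogen-bar(Q)` splits.
-/

open CategoryTheory Limits Opposite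

universe v u

variable {C : Type u} [Category.{v} C]

section
variable [Abelian C] [HasLimits C] [HasColimits C]

/-- `Cogen Q`: subobjects of products of copies of `Q`. -/
def CogenClass (Q X : C) : Prop :=
  ∃ (ι : Type v) (f : X ⟶ ∏ᶜ (fun _ : ι => Q)), Mono f

/-- `Cogen-bar Q`: quotients of objects of `Cogen Q`. -/
def CogenBarClass (Q X : C) : Prop :=
  ∃ (N : C), CogenClass Q N ∧ ∃ p : N ⟶ X, Epi p

/-- `Ext¹(X, Q) = 0`, encoded as: every short exact sequence
`0 → Q → E → X → 0` splits. -/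
def Ext1VanishesInto (X Q : C) : Prop :=
  ∀ (E : C) (i : Q ⟶ E) (p : E ⟶ X) (w : i ≫ p = 0),
    (ShortComplex.mk i p w).ShortExact → ∃ r : E ⟶ Q, i ≫ r = 𝟙 Q

end

section Aux

variable [Abelian C] [HasLimits C] [HasColimits C]

/-- `Q` cogenerates itself. -/
lemma cogenClass_self (Q : C) : CogenClass Q Q := by
  refine ⟨PUnit.{v+1}, Pi.lift (fun _ => 𝟙 Q), ?_⟩
  have h : Pi.lift (fun _ : PUnit.{v+1} => 𝟙 Q) ≫ Pi.π _ PUnit.unit = 𝟙 Q := by simp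
  have : Mono (Pi.lift (fun _ : PUnit.{v+1} => 𝟙 Q) ≫ Pi.π _ PUnit.unit) := by
    rw [h]; infer_instance
  exact mono_of_mono _ (Pi.π _ PUnit.unit)

/-- `Cogen Q` is closed under subobjects. -/
lemma cogenClass_of_mono {Q X Y : C} (f : X ⟶ Y) (hf : Mono f) (hY : CogenClass Q Y) :
    CogenClass Q X := by
  obtain ⟨κ, m, hm⟩ := hY
  exact ⟨κ, f ≫ m, by haveI := hf; haveI := hm; infer_instance⟩

open CoproductsFromFiniteFiltered in
lemma exists_mono_sigma_to_pi [AB5 C] {α : Type v} (M : α → C) :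
    ∃ c : (∐ M) ⟶ (∏ᶜ M), Mono c := by
  classical
  haveI : HasFiniteBiproducts C := Abelian.hasFiniteBiproducts
  let D := Discrete.functor M
  let δ : ∀ (x y : Discrete α), D.obj x ⟶ D.obj y :=
    fun x y => if h : x = y then eqToHom (by rw [h]) else 0
  let app : ∀ S : Finset (Discrete α), (∐ fun x : ↥S => D.obj x.1) ⟶ ∏ᶜ M :=
    fun S => Pi.lift (fun j : α => Sigma.desc (fun x : ↥S => δ x.1 ⟨j⟩))
  have happ : ∀ (S : Finset (Discrete α)) (x : ↥S) (j : α),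
      Sigma.ι (fun x : ↥S => D.obj x.1) x ≫ app S ≫ Pi.π M j = δ x.1 ⟨j⟩ := by
    intro S x j
    change Sigma.ι (fun x : ↥S => D.obj x.1) x ≫ (Pi.lift _ ≫ Pi.π M j) = _
    rw [Pi.lift_π, Sigma.ι_desc]
  have mono_app : ∀ S, Mono (app S) := by
    intro S
    let ρ : (∏ᶜ M) ⟶ ∏ᶜ (fun x : ↥S => D.obj x.1) := Pi.lift (fun x => Pi.π M x.1.as)
    have heq : app S ≫ ρ =
        (biproduct.isoCoproduct (fun x : ↥S => D.obj x.1)).inv ≫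
        (biproduct.isoProduct (fun x : ↥S => D.obj x.1)).hom := by
      apply colimit.hom_ext
      rintro ⟨x⟩
      apply limit.hom_ext
      rintro ⟨y⟩
      have hx : colimit.ι (Discrete.functor (fun x : ↥S => D.obj x.1)) ⟨x⟩ =
        Sigma.ι (fun x : ↥S => D.obj x.1) x := rfl
      have hy : limit.π (Discrete.functor (fun x : ↥S => D.obj x.1)) ⟨y⟩ =
        Pi.π (fun x : ↥S => D.obj x.1) y := rfl
      have h1 : ρ ≫ Pi.π (fun x : ↥S => D.obj x.1) y = Pi.π M y.1.as := by simp [ρ]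
      simp only [Category.assoc]
      rw [h1, happ S x y.1.as]
      simp only [biproduct.isoCoproduct_inv, biproduct.isoProduct_hom, colimit.ι_desc_assoc,
        Cofan.mk_pt, Cofan.mk_ι_app, limit.lift_π, Fan.mk_pt, Fan.mk_π_app]
      rw [biproduct.ι_π]
      by_cases h : x = y
      · subst h
        simp [δ]
      · have h' : x.1 ≠ y.1 := fun hh => h (Subtype.ext hh)
        simp [δ, dif_neg h', dif_neg h]
    have : Mono (app S ≫ ρ) := by rw [heq]; infer_instance
    exact mono_of_mono (app S) ρ
  let G : Finset (Discrete α) ⥤ C := (Functor.const _).obj (∏ᶜ M)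
  let η : liftToFinsetObj D ⟶ G :=
    { app := app
      naturality := by
        intro S T h
        change @CategoryStruct.comp C _ (∐ fun x : ↥S => D.obj x.1) (∐ fun x : ↥T => D.obj x.1) _
          (Sigma.desc fun y : ↥S => Sigma.ι (fun x : ↥T => D.obj x.1) ⟨y, h.down.down y.2⟩)
          (app T) = app S ≫ _
        apply colimit.hom_ext
        rintro ⟨x⟩
        apply limit.hom_ext
        rintro ⟨j⟩
        simp only [liftToFinsetObj_map, Category.assoc, G, Functor.const_obj_map,
          colimit.ι_desc_assoc, Cofan.mk_pt, Cofan.mk_ι_app]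
        rw [happ T ⟨x.1, h.down.down x.2⟩ j]
        rw [show 𝟙 (∏ᶜ M) ≫ limit.π (Discrete.functor M) ({as := j} : Discrete α) =
          limit.π (Discrete.functor M) {as := j} from Category.id_comp _]
        rw [happ S x j] }
  haveI : ∀ S, Mono (η.app S) := mono_app
  haveI : Mono η := NatTrans.mono_of_mono_app η
  haveI : PreservesFiniteLimits (colim (J := Finset (Discrete α)) (C := C)) :=
    HasExactColimitsOfShape.preservesFiniteLimits
  haveI hmono : Mono (colimMap η) := by
    show Mono ((colim (J := Finset (Discrete α)) (C := C)).map η)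
    exact Functor.map_mono _ η
  let d : colimit G ⟶ ∏ᶜ M :=
    colimit.desc G ⟨∏ᶜ M, ⟨fun _ => 𝟙 _, by intros; simp [G]⟩⟩
  have hι : ∀ S T : Finset (Discrete α), colimit.ι G S = colimit.ι G T := by
    have key : ∀ S T : Finset (Discrete α), S ≤ T → colimit.ι G S = colimit.ι G T := by
      intro S T hST
      rw [← colimit.w G (homOfLE hST)]
      simp [G]
    intro S T
    rw [key S (S ⊔ T) le_sup_left, key T (S ⊔ T) le_sup_right]
  haveI : IsIso d := by
    refine ⟨colimit.ι G ∅, ?_, by rw [colimit.ι_desc]; rfl⟩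
    apply colimit.hom_ext
    intro S
    rw [← Category.assoc, colimit.ι_desc]
    simpa using hι ∅ S
  exact ⟨(colimit.isoColimitCocone (liftToFinsetColimitCocone D)).hom ≫ colimMap η ≫ d,
    by have h1 : Mono (colimMap η ≫ d) := @mono_comp _ _ _ _ _ (colimMap η) hmono d (IsIso.mono_of_iso d); exact @mono_comp _ _ _ _ _ _ inferInstance _ h1⟩

/-- `Cogen Q` is closed under coproducts. -/
lemma cogenClass_coproduct [AB5 C] (Q : C) {α : Type v} (N : α → C)
    (h : ∀ i, CogenClass Q (N i)) : CogenClass Q (∐ N) := by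
  classical
  choose κ m hm using h
  haveI : HasFiniteBiproducts C := Abelian.hasFiniteBiproducts
  haveI : AB4 C := AB4.of_AB5 C
  let P : α → C := fun i => ∏ᶜ (fun _ : κ i => Q)
  let τ : Discrete.functor N ⟶ Discrete.functor P := Discrete.natTrans (fun X => m X.as)
  haveI : ∀ X : Discrete α, Mono (τ.app X) := fun X => hm X.as
  haveI : Mono τ := NatTrans.mono_of_mono_app τ
  haveI hm1 : Mono (Limits.Sigma.map (f := N) (g := P) m) := by
    show Mono ((colim (J := Discrete α) (C := C)).map τ)
    exact Functor.map_mono _ _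
  obtain ⟨c, hc⟩ := exists_mono_sigma_to_pi P
  haveI := hc
  let s : (∏ᶜ P) ⟶ ∏ᶜ (fun _ : Σ i, κ i => Q) := Pi.lift (fun x => Pi.π P x.1 ≫ Pi.π _ x.2)
  let r : (∏ᶜ (fun _ : Σ i, κ i => Q)) ⟶ ∏ᶜ P :=
    Pi.lift (fun i => Pi.lift (fun k : κ i => Pi.π (fun _ : Σ i, κ i => Q) ⟨i, k⟩))
  have hsr : s ≫ r = 𝟙 _ := by
    apply limit.hom_ext
    rintro ⟨i⟩
    apply limit.hom_ext
    rintro ⟨k⟩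
    simp [s, r]
  haveI : Mono (s ≫ r) := by rw [hsr]; infer_instance
  haveI : Mono s := mono_of_mono s r
  exact ⟨Σ i, κ i, Limits.Sigma.map (f := N) (g := P) m ≫ c ≫ s, inferInstance⟩

/-- An extension of an object of `Cogen-bar Q` by `Q` is in `Cogen-bar Q`. -/
lemma cogenBarClass_extension (Q : C) (T : C → Prop) (htp : IsTorsionPair T (CogenClass Q))
    {M E : C} (hM : CogenBarClass Q M)
    (i : Q ⟶ E) (p : E ⟶ M) (w : i ≫ p = 0)
    (hSE : (ShortComplex.mk i p w).ShortExact) :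
    CogenBarClass Q E := by
  obtain ⟨N, hN, q, hq⟩ := hM
  haveI := hq
  haveI : Mono i := hSE.mono_f
  haveI : Epi (pullback.fst p q) := inferInstance
  let k := kernel.ι (pullback.snd p q)
  have hfst : (k ≫ pullback.fst p q) ≫ p = 0 := by
    rw [Category.assoc, pullback.condition, ← Category.assoc, kernel.condition, zero_comp]
  obtain ⟨u, hu⟩ := hSE.exact.lift' (k ≫ pullback.fst p q) hfst
  let j : Q ⟶ pullback p q := pullback.lift i 0 (by rw [w, zero_comp])
  have hu' : u ≫ j = k := by
    apply pullback.hom_ext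
    · simp only [j, Category.assoc, pullback.lift_fst]; exact hu
    · simp only [j, k, Category.assoc, pullback.lift_snd, comp_zero, kernel.condition]
  haveI : Mono (u ≫ j) := by rw [hu']; infer_instance
  haveI hmu : Mono u := mono_of_mono u j
  have hK : CogenClass Q (kernel (pullback.snd p q)) :=
    cogenClass_of_mono u hmu (cogenClass_self Q)
  have hP : CogenClass Q (pullback p q) := by
    rw [htp.torsionFree_iff]
    intro X hX f
    have h1 : f ≫ pullback.snd p q = 0 := (htp.torsion_iff X).mp hX _ hN _
    have h2 : kernel.lift (pullback.snd p q) f h1 = 0 := (htp.torsion_iff X).mp hX _ hK _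
    rw [← kernel.lift_ι (pullback.snd p q) f h1, h2, zero_comp]
  exact ⟨pullback p q, hP, pullback.fst p q, inferInstance⟩

end Aux

theorem cogenBar_abelian_exact_grothendieck_cotilting
    [Abelian C] [HasColimits C] [HasLimits C] [AB5 C]
    (hsep : ∃ G : C, IsSeparator G)
    (Q : C)
    -- `Q` is quasi-cotilting
    (hQ : ∀ X : C, CogenClass Q X ↔ (Ext1VanishesInto X Q ∧ CogenBarClass Q X))
    (T : C → Prop) (htp : IsTorsionPair T (CogenClass Q)) :
    -- closed under subobjects
    (∀ (X Y : C) (f : X ⟶ Y), Mono f → CogenBarClass Q Y → CogenBarClass Q X) ∧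
    -- closed under quotients
    (∀ (X Y : C) (f : X ⟶ Y), Epi f → CogenBarClass Q X → CogenBarClass Q Y) ∧
    -- closed under coproducts
    (∀ (ι : Type v) (g : ι → C), (∀ i, CogenBarClass Q (g i)) →
      CogenBarClass Q (∐ g)) ∧
    -- abelian exact subcategory: closed under kernels and cokernels
    (∀ (X Y : C) (f : X ⟶ Y), CogenBarClass Q X → CogenBarClass Q Y →
      CogenBarClass Q (kernel f) ∧ CogenBarClass Q (cokernel f)) ∧
    -- it has a generator (hence it is a Grothendieck category)
    (∃ G₀ : C, CogenBarClass Q G₀ ∧ ∀ M : C, CogenBarClass Q M →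
      ∃ (ι : Type v) (p : (∐ fun _ : ι => G₀) ⟶ M), Epi p) ∧
    -- `Q` is 1-cotilting in `Cogen-bar(Q)`
    (∀ M : C, CogenBarClass Q M →
      (CogenClass Q M ↔
        ∀ (E : C) (i : Q ⟶ E) (p : E ⟶ M) (w : i ≫ p = 0),
          CogenBarClass Q E → (ShortComplex.mk i p w).ShortExact →
            ∃ r : E ⟶ Q, i ≫ r = 𝟙 Q)) := by
  obtain ⟨G, hG⟩ := hsep
  have hsub : ∀ (X Y : C) (f : X ⟶ Y), Mono f → CogenBarClass Q Y → CogenBarClass Q X := by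
    intro X Y f hf hY
    obtain ⟨N, hN, q, hq⟩ := hY
    haveI := hf; haveI := hq
    exact ⟨pullback q f, cogenClass_of_mono (pullback.fst q f) inferInstance hN,
      pullback.snd q f, inferInstance⟩
  have hquot : ∀ (X Y : C) (f : X ⟶ Y), Epi f → CogenBarClass Q X → CogenBarClass Q Y := by
    intro X Y f hf hX
    obtain ⟨N, hN, q, hq⟩ := hX
    haveI := hf; haveI := hq
    exact ⟨N, hN, q ≫ f, inferInstance⟩
  have hcoprod : ∀ (ι : Type v) (g : ι → C), (∀ i, CogenBarClass Q (g i)) →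
      CogenBarClass Q (∐ g) := by
    intro ι g hg
    choose N hN q hq using hg
    haveI : ∀ i, Epi (q i) := hq
    exact ⟨∐ N, cogenClass_coproduct Q N hN, Limits.Sigma.map q, inferInstance⟩
  refine ⟨hsub, hquot, hcoprod, ?_, ?_, ?_⟩
  · intro X Y f hX hY
    exact ⟨hsub _ _ (kernel.ι f) inferInstance hX, hquot _ _ (cokernel.π f) inferInstance hY⟩
  · -- generator
    obtain ⟨A, B, i, p, w, hA, hB, hSE⟩ := htp.exists_seq G
    haveI := hSE.epi_g
    refine ⟨B, ⟨B, hB, 𝟙 B, inferInstance⟩, ?_⟩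
    intro M hM
    obtain ⟨N, hN, q, hq⟩ := hM
    haveI := hq
    have hfac : ∀ f : G ⟶ N, ∃ f' : B ⟶ N, p ≫ f' = f := by
      intro f
      have hif : i ≫ f = 0 := (htp.torsion_iff A).mp hA N hN (i ≫ f)
      exact hSE.exact.desc' f hif
    choose fb hfb using hfac
    have he : Epi (Sigma.desc (fun f : (G ⟶ N) => fb f)) := by
      constructor
      intro Z u v huv
      refine (isSeparator_def G).mp hG u v (fun h => ?_)
      have h1 : fb h ≫ u = fb h ≫ v := by
        have h2 := congrArg (fun t => Sigma.ι (fun _ : (G ⟶ N) => B) h ≫ t) huv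
        simpa using h2
      calc h ≫ u = p ≫ fb h ≫ u := by rw [← Category.assoc, hfb h]
        _ = p ≫ fb h ≫ v := by rw [h1]
        _ = h ≫ v := by rw [← Category.assoc, hfb h]
    haveI := he
    exact ⟨(G ⟶ N), Sigma.desc (fun f => fb f) ≫ q, inferInstance⟩
  · -- cotilting
    intro M hM
    constructor
    · intro hMco E i p w _ hSE
      exact ((hQ M).mp hMco).1 E i p w hSE
    · intro hsplit
      refine (hQ M).mpr ⟨?_, hM⟩
      intro E i p w hSE
      exact hsplit E i p w (cogenBarClass_extension Q T htp hM i p w hSE) hSE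
end
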